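/- For a complex of groups G(𝒴) over a simplicial complex Y and a simplex σ of Y, the assignment F_σ defined on the induced complex of groups over the block of σ — by (F_σ)_τ = ψ_{σ,τ} on local groups, F_σ(a) = 1 if t(a) = σ, and F_σ(a) = g_{b,a} otherwise (where b is the edge from t(a) to σ) — is a morphism from G(ℬ(σ)) to the group G_σ, i.e. it satisfies (F_σ)_{t(a)} ∘ ψ_a = Ad(F_σ(a)) ∘ (F_σ)_{i(a)} for every edge a of ℬ(σ), and (F_σ)_{t(b)}(g_{b,a}) F_σ(ba) = F_σ(b) F_σ(a) for every composable pair. -/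

import Mathlib

/-!
If `t(a) = σ` both identities collapse, since `ψ_{σ,σ} = id` and `F_σ(a) = 1`. Otherwise
`F_σ(a) = g_{b,a}` and the two identities are exactly the compatibility axiom
`Ad(g_{b,a}) ∘ ψ_{ba} = ψ_b ∘ ψ_a` and the cocycle condition for the composable triple
`b, a, a'`. Irreflexivity and transitivity of the face relation ensure that the initial
vertex of an edge of the block is never `σ`, so no other degenerate case arises.
-/

/-- A complex of groups over a simplicial scwol, encoded via the vertex set `V`
and the strict-face relation `r` (`r σ τ`: σ is a strict face of τ, edge from
τ to σ). -/
structure ComplexOfGroups (V : Type) (r : V → V → Prop) where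
  G : V → GrpCat
  ψ : ∀ {σ τ : V}, r σ τ → (↥(G τ) →* ↥(G σ))
  ψ_inj : ∀ {σ τ : V} (h : r σ τ), Function.Injective (ψ h)
  tw : ∀ {σ τ υ : V}, r σ τ → r τ υ → ↥(G σ)
  compat : ∀ {σ τ υ : V} (h1 : r σ τ) (h2 : r τ υ) (h12 : r σ υ) (x : ↥(G υ)),
    tw h1 h2 * ψ h12 x * (tw h1 h2)⁻¹ = ψ h1 (ψ h2 x)
  cocycle : ∀ {σ τ υ ρ : V} (h1 : r σ τ) (h2 : r τ υ) (h3 : r υ ρ)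
      (h12 : r σ υ) (h23 : r τ ρ),
    ψ h1 (tw h2 h3) * tw h1 h23 = tw h1 h2 * tw h12 h3

/-- A morphism from a complex of groups to a group `H`. -/
structure MorphismToGroup {V : Type} {r : V → V → Prop}
    (C : ComplexOfGroups V r) (H : Type) [Group H] where
  F : ∀ v : V, ↥(C.G v) →* H
  Fa : ∀ {σ τ : V}, r σ τ → H
  equiv : ∀ {σ τ : V} (h : r σ τ) (x : ↥(C.G τ)),
    F σ (C.ψ h x) = Fa h * F τ x * (Fa h)⁻¹
  compat : ∀ {σ τ υ : V} (h1 : r σ τ) (h2 : r τ υ) (h12 : r σ υ),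
    F σ (C.tw h1 h2) * Fa h12 = Fa h1 * Fa h2

variable {V : Type} {r : V → V → Prop}

/-- The vertices of the block of σ: the simplices containing σ (including σ). -/
def BlockV (r : V → V → Prop) (σ : V) : Type := {τ : V // σ = τ ∨ r σ τ}

/-- The edges of the block: the edges of the ambient scwol between block
vertices. -/
def blockRel (r : V → V → Prop) (σ : V) : BlockV r σ → BlockV r σ → Prop :=
  fun τ τ' => r τ.1 τ'.1

/-- The induced complex of groups over the block of σ (pullback of `C` under
the inclusion of the block in the ambient scwol). -/
def blockCoG (C : ComplexOfGroups V r) (σ : V) :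
    ComplexOfGroups (BlockV r σ) (blockRel r σ) where
  G := fun τ => C.G τ.1
  ψ := fun h => C.ψ h
  ψ_inj := fun h => C.ψ_inj h
  tw := fun h1 h2 => C.tw h1 h2
  compat := fun h1 h2 h12 x => C.compat h1 h2 h12 x
  cocycle := fun h1 h2 h3 h12 h23 => C.cocycle h1 h2 h3 h12 h23

/-- Transport of local groups along an equality of vertices. -/
def castHom (C : ComplexOfGroups V r) {v w : V} (e : v = w) :
    ↥(C.G v) →* ↥(C.G w) := by subst e; exact MonoidHom.id _

/-- The local components of the canonical morphism F_σ over the block: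
ψ_{σ,τ}, where ψ_{σ,σ} = id. -/
noncomputable def psiFrom (C : ComplexOfGroups V r) (σ : V) {τ : V}
    (h : σ = τ ∨ r σ τ) : ↥(C.G τ) →* ↥(C.G σ) :=
  haveI := Classical.dec (σ = τ)
  if e : σ = τ then castHom C e.symm else C.ψ (h.resolve_left e)

/-- The edge components of the canonical morphism F_σ over the block:
F_σ(a) = 1 if t(a) = σ, and F_σ(a) = g_{b,a} otherwise, where b is the edge
from t(a) to σ. -/
noncomputable def blockFedge (C : ComplexOfGroups V r) (σ : V)
    {τ τ' : BlockV r σ} (h : blockRel r σ τ τ') : ↥(C.G σ) :=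
  haveI := Classical.dec (σ = τ.1)
  if e : σ = τ.1 then 1 else C.tw (τ.2.resolve_left e) h

lemma BlockV.ne_right_of_blockRel {σ : V} (hirr : ∀ v : V, ¬ r v v)
    (htrans : ∀ {a b c : V}, r a b → r b c → r a c) {τ τ' : BlockV r σ}
    (h : blockRel r σ τ τ') : σ ≠ τ'.1 := by
  change r τ.1 τ'.1 at h
  have hστ' : r σ τ'.1 := by
    rcases τ.2 with e | hστ
    · exact e.symm.subst (motive := (r · τ'.1)) h
    · exact htrans hστ h
  exact fun e => hirr σ (e.symm.subst (motive := (r σ ·)) hστ')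

namespace ComplexOfGroups

variable (C : ComplexOfGroups V r) (σ : V)

@[simp]
lemma psiFrom_self (h : σ = σ ∨ r σ σ) : psiFrom C σ h = MonoidHom.id _ :=
  dif_pos rfl

lemma psiFrom_of_ne {τ : V} (h : σ = τ ∨ r σ τ) (hne : σ ≠ τ) :
    psiFrom C σ h = C.ψ (h.resolve_left hne) :=
  dif_neg hne

variable {σ}

lemma blockFedge_of_eq {τ τ' : BlockV r σ} (h : blockRel r σ τ τ') (e : σ = τ.1) :
    blockFedge C σ h = 1 :=
  dif_pos e

lemma blockFedge_of_ne {τ τ' : BlockV r σ} (h : blockRel r σ τ τ') (hne : σ ≠ τ.1) :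
    blockFedge C σ h = C.tw (τ.2.resolve_left hne) h :=
  dif_neg hne

lemma psiFrom_ψ (hirr : ∀ v : V, ¬ r v v)
    (htrans : ∀ {a b c : V}, r a b → r b c → r a c)
    {τ τ' : BlockV r σ} (h : blockRel r σ τ τ') (x : C.G τ'.1) :
    psiFrom C σ τ.2 (C.ψ h x) =
      blockFedge C σ h * psiFrom C σ τ'.2 x * (blockFedge C σ h)⁻¹ := by
  rw [psiFrom_of_ne C σ τ'.2 (BlockV.ne_right_of_blockRel hirr htrans h)]
  obtain ⟨τ, hτ⟩ := τ
  rcases eq_or_ne σ τ with rfl | hne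
  · simp [blockFedge_of_eq C h rfl]
  · rw [psiFrom_of_ne C σ hτ hne, blockFedge_of_ne C h hne]
    exact (C.compat _ h _ x).symm

lemma psiFrom_tw_mul_blockFedge (hirr : ∀ v : V, ¬ r v v)
    (htrans : ∀ {a b c : V}, r a b → r b c → r a c)
    {τ τ' τ'' : BlockV r σ} (h1 : blockRel r σ τ τ')
    (h2 : blockRel r σ τ' τ'') (h12 : blockRel r σ τ τ'') :
    psiFrom C σ τ.2 (C.tw h1 h2) * blockFedge C σ h12 =
      blockFedge C σ h1 * blockFedge C σ h2 := by
  rw [blockFedge_of_ne C h2 (BlockV.ne_right_of_blockRel hirr htrans h1)]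
  obtain ⟨τ, hτ⟩ := τ
  rcases eq_or_ne σ τ with rfl | hne
  · simp [blockFedge_of_eq C h1 rfl, blockFedge_of_eq C h12 rfl]
  · rw [psiFrom_of_ne C σ hτ hne, blockFedge_of_ne C h1 hne, blockFedge_of_ne C h12 hne]
    exact C.cocycle _ h1 h2 _ h12

noncomputable def blockMorphism (hirr : ∀ v : V, ¬ r v v)
    (htrans : ∀ {a b c : V}, r a b → r b c → r a c) :
    MorphismToGroup (blockCoG C σ) (C.G σ) where
  F τ := psiFrom C σ τ.2
  Fa h := blockFedge C σ h
  equiv h x := psiFrom_ψ C hirr htrans h x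
  compat h1 h2 h12 := psiFrom_tw_mul_blockFedge C hirr htrans h1 h2 h12

end ComplexOfGroups

/-- the assignment F_σ—given on local groups by ψ_{σ,τ} and on
edges by F_σ(a) = 1 if t(a) = σ and F_σ(a) = g_{b,a} otherwise (b the edge
from t(a) to σ)—is a morphism from the induced complex of groups over the
block of σ to the group G_σ, i.e. it satisfies
(F_σ)_{t(a)} ∘ ψ_a = Ad(F_σ(a)) ∘ (F_σ)_{i(a)} for every edge a of the block
and (F_σ)_{t(b)}(g_{b,a}) F_σ(ba) = F_σ(b) F_σ(a) for every composable pair. -/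
theorem block_morphism_exists (C : ComplexOfGroups V r) (σ : V)
    (hirr : ∀ v : V, ¬ r v v)
    (htrans : ∀ {a b c : V}, r a b → r b c → r a c) :
    ∃ M : MorphismToGroup (blockCoG C σ) ↥(C.G σ),
      (∀ τ : BlockV r σ, M.F τ = psiFrom C σ τ.2) ∧
      (∀ (τ τ' : BlockV r σ) (h : blockRel r σ τ τ'),
        M.Fa h = blockFedge C σ h) :=
  ⟨ComplexOfGroups.blockMorphism C hirr htrans, fun _ => rfl, fun _ _ _ => rfl⟩
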